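/- Let F be a Hausdorff locally convex topological vector space over ℝ and let (G_i)_{i∈ℕ} be a countable family of Fréchet subspaces of F whose union (as sets) is all of F. Then for every Fréchet subspace G̃ of F there exists an index i such that G̃ ⊆ G_i (as sets) and the inclusion map G̃ → G_i is continuous. -/

import Mathlib

/-!
For each `i`, the graph `Kᵢ = {(x, y) ∈ G̃ × Gᵢ | x = y in F}` is closed in `G̃ × Gᵢ`, hence
Fréchet, and the ranges `G̃ ∩ Gᵢ` of the projections `Kᵢ → G̃` cover `G̃`. By Baire, one of these
ranges is non-meagre. A continuous linear map out of a Fréchet space with non-meagre range is open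
and onto (Banach–Schauder: non-meagreness makes the closure of the image of every neighbourhood of
`0` a neighbourhood of `0`, and completeness lets a series of successive approximations remove the
closure). So `Kᵢ → G̃` is a linear homeomorphism, and following its inverse by the second
projection gives the continuous inclusion `G̃ → Gᵢ`.
-/

/-- A Fréchet subspace of a Hausdorff locally convex space `F`: a linear subspace equipped
with a (generally finer) complete metrizable locally convex Hausdorff vector topology such
that the inclusion into `F` is continuous. -/
structure FrechetSubspace (F : Type*) [AddCommGroup F] [Module ℝ F] [TopologicalSpace F] where
  toSubmodule : Submodule ℝ F
  uniformSpace : UniformSpace toSubmodule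
  uniformAddGroup : @IsUniformAddGroup toSubmodule uniformSpace _
  continuousSMul : @ContinuousSMul ℝ toSubmodule _ _ uniformSpace.toTopologicalSpace
  locallyConvex : @LocallyConvexSpace ℝ toSubmodule _ _ _ _ uniformSpace.toTopologicalSpace
  t2 : @T2Space toSubmodule uniformSpace.toTopologicalSpace
  complete : @CompleteSpace toSubmodule uniformSpace
  metrizable : @TopologicalSpace.MetrizableSpace toSubmodule uniformSpace.toTopologicalSpace
  continuous_val : @Continuous toSubmodule F uniformSpace.toTopologicalSpace _ Subtype.val

open Filter Function Set Topology
open scoped Pointwise Uniformity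

theorem exists_seq_of_forall_exists_succ {α : Type*} {P : ℕ → α → Prop} {R : ℕ → α → α → Prop}
    {a : α} (h₀ : P 0 a) (h : ∀ n x, P n x → ∃ y, P (n + 1) y ∧ R n x y) :
    ∃ s : ℕ → α, s 0 = a ∧ ∀ n, P n (s n) ∧ R n (s n) (s (n + 1)) := by
  choose g hg using h
  let t : ∀ n, {x // P n x} :=
    fun n => Nat.rec ⟨a, h₀⟩ (fun n x => ⟨g n x x.2, (hg n x x.2).1⟩) n
  exact ⟨fun n => (t n).1, rfl, fun n => ⟨(t n).2, (hg n _ (t n).2).2⟩⟩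

theorem nonempty_interior_closure_of_not_isMeagre {X : Type*} [TopologicalSpace X] {s : Set X}
    (hs : ¬IsMeagre s) : (interior (closure s)).Nonempty :=
  nonempty_iff_ne_empty.2 fun h => hs (IsNowhereDense.isMeagre h)

theorem IsMeagre.smul_set₀ {G₀ X : Type*} [GroupWithZero G₀] [MulAction G₀ X]
    [TopologicalSpace X] [ContinuousConstSMul G₀ X] {s : Set X} (hs : IsMeagre s) {c : G₀}
    (hc : c ≠ 0) : IsMeagre (c • s) := by
  rw [← preimage_smul_inv₀ hc]
  exact hs.preimage_of_isOpenMap (continuous_const_smul _) (isOpenMap_smul₀ (inv_ne_zero hc))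

theorem exists_not_isMeagre_of_iUnion_eq_univ {X ι : Type*} [TopologicalSpace X] [BaireSpace X]
    [Nonempty X] [Countable ι] {s : ι → Set X} (hs : ⋃ i, s i = univ) :
    ∃ i, ¬IsMeagre (s i) := by
  by_contra! h
  exact not_isMeagre_of_isOpen isOpen_univ univ_nonempty (hs ▸ isMeagre_iUnion h)

theorem Filter.HasAntitoneBasis.tendsto_of_mem_closure_image {E X : Type*} [TopologicalSpace E]
    [TopologicalSpace X] [RegularSpace X] {f : E → X} {x : E} {y : X}
    (hf : Tendsto f (𝓝 x) (𝓝 y)) {v : ℕ → Set E} (hv : (𝓝 x).HasAntitoneBasis v) {r : ℕ → X}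
    (hr : ∀ n, r n ∈ closure (f '' v n)) : Tendsto r atTop (𝓝 y) := by
  refine (closed_nhds_basis y).tendsto_right_iff.2 fun W ⟨hW, hWc⟩ => ?_
  obtain ⟨N, hN⟩ := hv.mem_iff.1 (hf hW)
  filter_upwards [eventually_ge_atTop N] with n hn
  exact closure_minimal (image_subset_iff.2 ((hv.antitone hn).trans hN)) hWc (hr n)

theorem sub_mem_of_forall_succ_sub_mem {G : Type*} [AddGroup G] {v : ℕ → Set G}
    (hv0 : ∀ n, (0 : G) ∈ v n) (hv : ∀ n, v (n + 1) + v (n + 1) ⊆ v n) {s : ℕ → G}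
    (hs : ∀ n, s (n + 1) - s n ∈ v (n + 1)) {m n : ℕ} (hmn : m ≤ n) : s n - s m ∈ v m := by
  induction hmn using Nat.decreasingInduction with
  | self => simpa using hv0 n
  | of_succ k _ ih =>
    rw [← sub_add_sub_cancel (s n) (s (k + 1)) (s k)]
    exact hv k (add_mem_add ih (hs k))

section TopologicalAddGroup

variable {G : Type*} [AddGroup G] [TopologicalSpace G] [IsTopologicalAddGroup G]

theorem closure_sub_closure_subset (s t : Set G) : closure s - closure t ⊆ closure (s - t) := by
  rintro _ ⟨a, ha, b, hb, rfl⟩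
  exact map_mem_closure₂ continuous_sub ha hb fun x hx y hy => sub_mem_sub hx hy

theorem sub_self_mem_nhds_zero_of_nonempty_interior {s : Set G} (hs : (interior s).Nonempty) :
    s - s ∈ 𝓝 0 := by
  obtain ⟨a, ha⟩ := hs
  exact mem_interior_iff_mem_nhds.1 (subset_interior_sub ⟨a, ha, a, ha, sub_self a⟩)

theorem exists_antitone_basis_nhds_zero_subset [FirstCountableTopology G] {U : Set G}
    (hU : U ∈ 𝓝 0) : ∃ v : ℕ → Set G, (𝓝 0).HasAntitoneBasis v ∧
      (∀ n, v (n + 1) + v (n + 1) ⊆ v n) ∧ v 0 ⊆ U := by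
  obtain ⟨u, hu, hu_add⟩ := IsTopologicalAddGroup.exists_antitone_basis_nhds_zero G
  obtain ⟨N, hN⟩ := hu.mem_iff.1 hU
  exact ⟨fun n => u (n + N), hu.comp_mono (fun _ _ h => by omega) (tendsto_add_atTop_nat N),
    fun n => by simpa [Nat.add_right_comm] using hu_add (n + N), by simpa using hN⟩

end TopologicalAddGroup

theorem cauchySeq_of_forall_succ_sub_mem {G : Type*} [AddGroup G] [UniformSpace G]
    [IsUniformAddGroup G] {v : ℕ → Set G} (hv : (𝓝 0).HasAntitoneBasis v)
    (hv_add : ∀ n, v (n + 1) + v (n + 1) ⊆ v n) {s : ℕ → G}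
    (hs : ∀ n, s (n + 1) - s n ∈ v (n + 1)) : CauchySeq s := by
  have h𝓤 : (𝓤 G).HasBasis (fun _ => True) fun i => {p : G × G | p.1 - p.2 ∈ v i} := by
    rw [uniformity_eq_comap_nhds_zero_swapped]
    exact hv.toHasBasis.comap _
  refine h𝓤.cauchySeq_iff'.2 fun i _ => ⟨i, fun n hn => ?_⟩
  exact sub_mem_of_forall_succ_sub_mem (fun n => mem_of_mem_nhds (hv.mem n)) hv_add hs hn

theorem image_mem_nhds_zero_of_closure_image_mem_nhds_zero {E X FE : Type*} [AddCommGroup E]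
    [UniformSpace E] [IsUniformAddGroup E] [FirstCountableTopology E] [CompleteSpace E]
    [AddCommGroup X] [TopologicalSpace X] [IsTopologicalAddGroup X] [T2Space X]
    [FunLike FE E X] [AddMonoidHomClass FE E X] {f : FE} (hf : Continuous f)
    (H : ∀ U ∈ 𝓝 (0 : E), closure (f '' U) ∈ 𝓝 0) {U : Set E} (hU : U ∈ 𝓝 0) :
    f '' U ∈ 𝓝 0 := by
  obtain ⟨U', hU', hU'c, hU'U⟩ := exists_mem_nhds_isClosed_subset hU
  obtain ⟨v, hv, hv_add, hvU'⟩ := exists_antitone_basis_nhds_zero_subset hU'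
  refine mem_of_superset (H _ (hv.mem 1)) fun y hy => ?_
  obtain ⟨s, hs₀, hs⟩ := exists_seq_of_forall_exists_succ
    (P := fun n x => y - f x ∈ closure (f '' v (n + 1))) (R := fun n x x' => x' - x ∈ v (n + 1))
    (a := 0) (by simpa using hy) fun n x hx => by
      obtain ⟨_, ⟨w, hw, rfl⟩, hxw⟩ :=
        mem_closure_iff_nhds_zero.1 hx _ (neg_mem_nhds_zero _ (H _ (hv.mem (n + 2))))
      refine ⟨x + w, ?_, by simpa using hw⟩
      simpa [sub_sub, add_comm (f x)] using hxw
  obtain ⟨e, he⟩ := cauchySeq_tendsto_of_complete <|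
    cauchySeq_of_forall_succ_sub_mem hv hv_add fun n => (hs n).2
  have heU' : e ∈ U' := hU'c.mem_of_tendsto he <| Eventually.of_forall fun n => hvU' <| by
    simpa [hs₀] using sub_mem_of_forall_succ_sub_mem (fun n => mem_of_mem_nhds (hv.mem n)) hv_add
      (fun n => (hs n).2) n.zero_le
  have hv' : (𝓝 0).HasAntitoneBasis fun n => v (n + 1) :=
    hv.comp_mono (fun _ _ h => by omega) (tendsto_add_atTop_nat 1)
  have hr : Tendsto (fun n => y - f (s n)) atTop (𝓝 0) :=
    hv'.tendsto_of_mem_closure_image (map_zero f ▸ hf.tendsto 0) fun n => (hs n).1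
  have hfs : Tendsto (fun n => f (s n)) atTop (𝓝 y) := by
    simpa using (tendsto_const_nhds (x := y)).sub hr
  exact ⟨e, hU'U heU', tendsto_nhds_unique ((hf.tendsto e).comp he) hfs⟩

theorem iUnion_natCast_add_one_smul_eq_univ {E : Type*} [AddCommGroup E] [Module ℝ E]
    [TopologicalSpace E] [ContinuousSMul ℝ E] {V : Set E} (hV : V ∈ 𝓝 0) :
    ⋃ n : ℕ, ((n : ℝ) + 1) • V = univ := by
  refine eq_univ_of_forall fun x => mem_iUnion.2 ?_
  have hx : Tendsto (fun n : ℕ => (1 / ((n : ℝ) + 1)) • x) atTop (𝓝 0) := by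
    simpa using (tendsto_one_div_add_atTop_nhds_zero_nat (𝕜 := ℝ)).smul_const x
  obtain ⟨n, hn⟩ := (hx.eventually_mem hV).exists
  exact ⟨n, (mem_smul_set_iff_inv_smul_mem₀ (by positivity) _ _).2 (by simpa using hn)⟩

section OpenMapping

variable {E X : Type*} [AddCommGroup E] [Module ℝ E] [AddCommGroup X] [Module ℝ X]
  [TopologicalSpace X] [IsTopologicalAddGroup X] [ContinuousSMul ℝ X]

theorem LinearMap.closure_image_mem_nhds_zero_of_not_isMeagre_range [TopologicalSpace E]
    [IsTopologicalAddGroup E] [ContinuousSMul ℝ E] (f : E →ₗ[ℝ] X)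
    (hf : ¬IsMeagre (Set.range f)) {U : Set E} (hU : U ∈ 𝓝 0) : closure (f '' U) ∈ 𝓝 0 := by
  obtain ⟨V, hV, hVU⟩ := exists_nhds_half_neg hU
  have hfV : ¬IsMeagre (f '' V) := fun h => hf <| by
    rw [← image_univ, ← iUnion_natCast_add_one_smul_eq_univ hV, image_iUnion]
    exact isMeagre_iUnion fun n => image_smul_set f _ V ▸ h.smul_set₀ (by positivity)
  refine mem_of_superset (sub_self_mem_nhds_zero_of_nonempty_interior
    (nonempty_interior_closure_of_not_isMeagre hfV))
    ((closure_sub_closure_subset _ _).trans (closure_mono ?_))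
  rintro _ ⟨_, ⟨a, ha, rfl⟩, _, ⟨b, hb, rfl⟩, rfl⟩
  exact ⟨a - b, hVU a ha b hb, map_sub f a b⟩

variable [UniformSpace E] [IsUniformAddGroup E] [ContinuousSMul ℝ E] [FirstCountableTopology E]
  [CompleteSpace E] [T2Space X]

theorem LinearMap.image_mem_nhds_zero_of_not_isMeagre_range (f : E →ₗ[ℝ] X) (hf : Continuous f)
    (hr : ¬IsMeagre (Set.range f)) {U : Set E} (hU : U ∈ 𝓝 0) : f '' U ∈ 𝓝 0 :=
  image_mem_nhds_zero_of_closure_image_mem_nhds_zero hf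
    (fun _ => f.closure_image_mem_nhds_zero_of_not_isMeagre_range hr) hU

theorem ContinuousLinearMap.exists_continuousLinearEquiv_of_not_isMeagre_range (f : E →L[ℝ] X)
    (hinj : Injective f) (hr : ¬IsMeagre (Set.range f)) : ∃ e : E ≃L[ℝ] X, ⇑e = f := by
  have hopen := fun U (hU : U ∈ 𝓝 0) =>
    (f : E →ₗ[ℝ] X).image_mem_nhds_zero_of_not_isMeagre_range f.continuous hr hU
  have hsurj : Surjective f := LinearMap.range_eq_top.1 <|
    Submodule.eq_top_of_nonempty_interior' _ ⟨0, mem_interior_iff_mem_nhds.2 <| by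
      simpa [LinearMap.coe_range] using hopen univ univ_mem⟩
  let e := LinearEquiv.ofBijective (f : E →ₗ[ℝ] X) ⟨hinj, hsurj⟩
  have he : Continuous e.symm := continuous_of_continuousAt_zero e.symm fun U hU => by
    rw [map_zero] at hU
    rw [mem_map, ← e.image_eq_preimage_symm]
    exact hopen U hU
  exact ⟨{ e with continuous_toFun := f.continuous, continuous_invFun := he }, rfl⟩

end OpenMapping

section Factorization

variable {F : Type*} [AddCommGroup F] [Module ℝ F] [TopologicalSpace F] [T2Space F]
  {X : Type*} [AddCommGroup X] [Module ℝ X] [UniformSpace X] [IsUniformAddGroup X]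
  [ContinuousSMul ℝ X] [FirstCountableTopology X] [CompleteSpace X] [T2Space X]

theorem exists_comp_eq_of_not_isMeagre_preimage_range {Y : Type*} [AddCommGroup Y] [Module ℝ Y]
    [UniformSpace Y] [IsUniformAddGroup Y] [ContinuousSMul ℝ Y] [FirstCountableTopology Y]
    [CompleteSpace Y]
    (jX : X →L[ℝ] F) (jY : Y →L[ℝ] F) (hjY : Injective jY)
    (hr : ¬IsMeagre (jX ⁻¹' Set.range jY)) : ∃ g : X →L[ℝ] Y, jY ∘L g = jX := by
  let K := LinearMap.eqLocus ((jX : X →ₗ[ℝ] F) ∘ₗ LinearMap.fst ℝ X Y)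
    ((jY : Y →ₗ[ℝ] F) ∘ₗ LinearMap.snd ℝ X Y)
  have hK : IsClosed (K : Set (X × Y)) :=
    isClosed_eq (jX.continuous.comp continuous_fst) (jY.continuous.comp continuous_snd)
  have : IsUniformAddGroup K := IsUniformAddGroup.comap K.subtype
  have : CompleteSpace K := hK.completeSpace_coe
  have : FirstCountableTopology K := IsInducing.subtypeVal.firstCountableTopology
  have hKmem : ∀ p : K, jX (p : X × Y).1 = jY (p : X × Y).2 := fun p => p.2
  let π : K →L[ℝ] X := ContinuousLinearMap.fst ℝ X Y ∘L K.subtypeL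
  have hπ : Injective π := fun p q hpq => Subtype.ext <| Prod.ext hpq <| hjY <| by
    rw [← hKmem p, ← hKmem q]
    exact congrArg jX hpq
  have hrπ : jX ⁻¹' Set.range jY ⊆ Set.range π := by
    rintro x ⟨y, hy⟩
    exact ⟨⟨(x, y), hy.symm⟩, rfl⟩
  obtain ⟨e, he⟩ :=
    π.exists_continuousLinearEquiv_of_not_isMeagre_range hπ (mt (IsMeagre.mono hrπ) hr)
  refine ⟨ContinuousLinearMap.snd ℝ X Y ∘L K.subtypeL ∘L (e.symm : X →L[ℝ] K), ?_⟩
  ext x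
  have hx : π (e.symm x) = x := by rw [← he, e.apply_symm_apply]
  change jY ((e.symm x : K) : X × Y).2 = jX x
  rw [← hKmem]
  exact congrArg jX hx

theorem exists_comp_eq_of_range_subset_iUnion {ι : Type*} [Countable ι] {Y : ι → Type*}
    [∀ i, AddCommGroup (Y i)] [∀ i, Module ℝ (Y i)] [∀ i, UniformSpace (Y i)]
    [∀ i, IsUniformAddGroup (Y i)] [∀ i, ContinuousSMul ℝ (Y i)]
    [∀ i, FirstCountableTopology (Y i)] [∀ i, CompleteSpace (Y i)]
    (jX : X →L[ℝ] F) (jY : ∀ i, Y i →L[ℝ] F) (hjY : ∀ i, Injective (jY i))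
    (hcov : Set.range jX ⊆ ⋃ i, Set.range (jY i)) :
    ∃ i, ∃ g : X →L[ℝ] Y i, jY i ∘L g = jX := by
  have : (𝓤 X).IsCountablyGenerated := IsUniformAddGroup.uniformity_countably_generated
  obtain ⟨i, hi⟩ :=
    exists_not_isMeagre_of_iUnion_eq_univ (s := fun i => jX ⁻¹' Set.range (jY i))
      (by rw [← preimage_iUnion]; exact preimage_eq_univ_iff.2 hcov)
  exact ⟨i, exists_comp_eq_of_not_isMeagre_preimage_range jX (jY i) (hjY i) hi⟩

end Factorization

theorem frechetSubspace_cofinal_general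
    (F : Type*) [AddCommGroup F] [Module ℝ F] [TopologicalSpace F] [T2Space F]
    (G : ℕ → FrechetSubspace F)
    (hcover : ∀ x : F, ∃ i, x ∈ (G i).toSubmodule)
    (Gt : FrechetSubspace F) :
    ∃ i, ∃ h : (Gt.toSubmodule : Set F) ⊆ ((G i).toSubmodule : Set F),
      @Continuous _ _ Gt.uniformSpace.toTopologicalSpace (G i).uniformSpace.toTopologicalSpace
        (Set.inclusion h) := by
  -- without these `let`s the topology induced from `F` would be found on the subtypes
  let := Gt.uniformSpace
  let : TopologicalSpace Gt.toSubmodule := Gt.uniformSpace.toTopologicalSpace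
  have := Gt.uniformAddGroup
  have := Gt.continuousSMul
  have := Gt.t2
  have := Gt.complete
  have := Gt.metrizable
  let := fun i => (G i).uniformSpace
  let : ∀ i, TopologicalSpace (G i).toSubmodule := fun i =>
    (G i).uniformSpace.toTopologicalSpace
  have := fun i => (G i).uniformAddGroup
  have := fun i => (G i).continuousSMul
  have := fun i => (G i).complete
  have := fun i => (G i).metrizable
  obtain ⟨i, g, hg⟩ := exists_comp_eq_of_range_subset_iUnion
    ⟨Gt.toSubmodule.subtype, Gt.continuous_val⟩
    (fun i => ⟨(G i).toSubmodule.subtype, (G i).continuous_val⟩) (fun _ => Subtype.val_injective)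
    (by rintro _ ⟨x, rfl⟩; obtain ⟨i, hi⟩ := hcover x; exact mem_iUnion.2 ⟨i, ⟨x, hi⟩, rfl⟩)
  have hgx : ∀ x, ((g x : (G i).toSubmodule) : F) = x := fun x => congr($hg x)
  refine ⟨i, fun x hx => by simpa [hgx] using (g ⟨x, hx⟩).2, ?_⟩
  convert g.continuous
  ext x
  exact (hgx x).symm

/-- If a Hausdorff locally convex space `F` is covered by a countable family of Fréchet
subspaces `G i`, then every Fréchet subspace `Gt` of `F` is contained in some `G i`, with
continuous inclusion map `Gt → G i`. -/
theorem frechetSubspace_cofinal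
    (F : Type*) [AddCommGroup F] [Module ℝ F] [TopologicalSpace F] [IsTopologicalAddGroup F]
    [ContinuousSMul ℝ F] [LocallyConvexSpace ℝ F] [T2Space F]
    (G : ℕ → FrechetSubspace F)
    (hcover : ∀ x : F, ∃ i, x ∈ (G i).toSubmodule)
    (Gt : FrechetSubspace F) :
    ∃ i, ∃ h : (Gt.toSubmodule : Set F) ⊆ ((G i).toSubmodule : Set F),
      @Continuous _ _ Gt.uniformSpace.toTopologicalSpace (G i).uniformSpace.toTopologicalSpace
        (Set.inclusion h) :=
  frechetSubspace_cofinal_general F G hcover Gt
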